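/- arXiv:1805.06309 — 3 statements merged into one kernel-verified Lean document; each statement's English description precedes it below -/
import Mathlib

section
/- Let q = 4, let k be a positive even integer, and let F be a finite field with |F| = q^{3k}. Then for every z ∈ F, z^{q^{k+1}} + z^{q^{k+2}} + ... + z^{q^{3k}} = 0 if and only if z^{q^k} = z (i.e., z lies in the subfield of F with q^k elements). -/
lemma aux_sum_range_add {M : Type*} [AddCommMonoid M] (f : ℕ → M) (m n : ℕ) :
    ∑ i ∈ Finset.range (m + n), f i
      = (∑ i ∈ Finset.range m, f i) + ∑ i ∈ Finset.range n, f (m + i) := by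
  induction n with
  | zero => simp
  | succ n ih =>
      rw [show m + (n + 1) = (m + n) + 1 by omega, Finset.sum_range_succ, ih,
        Finset.sum_range_succ, add_assoc]

theorem stmt_10 {F : Type*} [Field F] [Fintype F] (k : ℕ) (hk : 0 < k) (hke : Even k)
    (hF : Fintype.card F = 4 ^ (3 * k)) :
    ∀ z : F, (∑ i ∈ Finset.Icc (k + 1) (3 * k), z ^ 4 ^ i) = 0 ↔ z ^ 4 ^ k = z := by
  -- characteristic 2
  have hcard0 : ((4 : ℕ) : F) ^ (3 * k) = 0 := by
    have h := FiniteField.cast_card_eq_zero F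
    rw [hF] at h; push_cast at h; push_cast; exact h
  have h4 : ((4 : ℕ) : F) = 0 :=
    pow_eq_zero_iff (by positivity) |>.mp hcard0
  have h2 : (2 : F) = 0 := by
    have : (2 : F) * (2 : F) = 0 := by
      have : ((4 : ℕ) : F) = (2 : F) * 2 := by norm_num
      rw [← this, h4]
    rcases mul_eq_zero.mp this with h | h <;> exact h
  have hadd : ∀ a : F, a + a = 0 := fun a => by
    rw [← two_mul, h2, zero_mul]
  have hchar : ringChar F = 2 := by
    haveI := ringChar.charP F
    have hdvd : ringChar F ∣ 2 := ringChar.dvd h2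
    have hp : (ringChar F).Prime := CharP.char_is_prime F _
    exact (Nat.prime_dvd_prime_iff_eq hp Nat.prime_two).mp hdvd
  haveI : CharP F 2 := hchar ▸ ringChar.charP F
  haveI : Fact (Nat.Prime 2) := ⟨Nat.prime_two⟩
  -- basic pow manipulations
  intro z
  have hpp : ∀ a b : ℕ, (z ^ 4 ^ a) ^ 4 ^ b = z ^ 4 ^ (a + b) := fun a b => by
    rw [← pow_mul, ← pow_add]
  have hz3k : z ^ 4 ^ (3 * k) = z := by
    have := FiniteField.pow_card z
    rwa [hF] at this
  have hshift : ∀ a : ℕ, z ^ 4 ^ (3 * k + a) = z ^ 4 ^ a := fun a => by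
    rw [← hpp (3 * k) a, hz3k]
  have hfrob : ∀ (s : Finset ℕ) (f : ℕ → F) (n : ℕ),
      (∑ i ∈ s, f i) ^ 4 ^ n = ∑ i ∈ s, f i ^ 4 ^ n := by
    intro s f n
    have h := sum_pow_char_pow 2 (2 * n) s f
    have h44 : (4 : ℕ) ^ n = 2 ^ (2 * n) := by
      rw [show (4 : ℕ) = 2 ^ 2 by norm_num, ← pow_mul]
    rw [h44]; exact h
  -- rewrite the Icc sum as a range sum
  have hIcc : (∑ i ∈ Finset.Icc (k + 1) (3 * k), z ^ 4 ^ i)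
      = ∑ j ∈ Finset.range (2 * k), z ^ 4 ^ ((k + 1) + j) := by
    rw [← Finset.Ico_add_one_right_eq_Icc, Finset.sum_Ico_eq_sum_range,
      show 3 * k + 1 - (k + 1) = 2 * k by omega]
  rw [hIcc]
  constructor
  · intro hS
    -- D := ∑_{j<2k} z^(4^(k+j)) satisfies D^4 = S = 0
    have hD4 : (∑ j ∈ Finset.range (2 * k), z ^ 4 ^ (k + j)) ^ 4 ^ 1 = 0 := by
      rw [hfrob]
      rw [← hS]
      apply Finset.sum_congr rfl
      intro j _
      rw [hpp, show k + j + 1 = (k + 1) + j by omega]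
    have hD : (∑ j ∈ Finset.range (2 * k), z ^ 4 ^ (k + j)) = 0 :=
      pow_eq_zero_iff (by positivity) |>.mp hD4
    -- V := ∑_{j<2k} z^(4^j) = D ^ (4^(2k)) = 0
    have hV : (∑ j ∈ Finset.range (2 * k), z ^ 4 ^ j) = 0 := by
      have h := hfrob (Finset.range (2 * k)) (fun j => z ^ 4 ^ (k + j)) (2 * k)
      rw [hD, zero_pow (by positivity)] at h
      refine Eq.trans ?_ h.symm
      apply Finset.sum_congr rfl
      intro j _
      rw [hpp, show k + j + 2 * k = 3 * k + j by omega, hshift]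
    -- V^4 = ∑_{j<2k} z^(4^(j+1)) = 0
    have hV4 : (∑ j ∈ Finset.range (2 * k), z ^ 4 ^ (j + 1)) = 0 := by
      have h := hfrob (Finset.range (2 * k)) (fun j => z ^ 4 ^ j) 1
      rw [hV, zero_pow (by positivity)] at h
      refine Eq.trans ?_ h.symm
      apply Finset.sum_congr rfl
      intro j _
      rw [hpp]
    -- telescoping: z^(4^(2k)) = z
    have h2k : z ^ 4 ^ (2 * k) = z := by
      have ha := Finset.sum_range_succ (fun j => z ^ 4 ^ j) (2 * k)
      have hb := Finset.sum_range_succ' (fun j => z ^ 4 ^ j) (2 * k)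
      simp only [hV, hV4, zero_add, add_zero] at ha hb
      rw [ha] at hb
      rw [hb, pow_zero, pow_one]
    have h4k : z ^ 4 ^ (2 * k + 2 * k) = z := by
      rw [← hpp (2 * k) (2 * k), h2k, h2k]
    calc z ^ 4 ^ k = z ^ 4 ^ (3 * k + k) := (hshift k).symm
      _ = z ^ 4 ^ (2 * k + 2 * k) := by rw [show 3 * k + k = 2 * k + 2 * k by omega]
      _ = z := h4k
  · intro hz
    have hper : ∀ a : ℕ, z ^ 4 ^ (k + a) = z ^ 4 ^ a := fun a => by
      rw [← hpp k a, hz]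
    have h1 : (∑ j ∈ Finset.range (2 * k), z ^ 4 ^ ((k + 1) + j))
        = ∑ j ∈ Finset.range (2 * k), z ^ 4 ^ (1 + j) := by
      apply Finset.sum_congr rfl
      intro j _
      rw [show (k + 1) + j = k + (1 + j) by omega, hper]
    rw [h1, show 2 * k = k + k by omega, aux_sum_range_add]
    have h2' : (∑ j ∈ Finset.range k, z ^ 4 ^ (1 + (k + j)))
        = ∑ j ∈ Finset.range k, z ^ 4 ^ (1 + j) := by
      apply Finset.sum_congr rfl
      intro j _
      rw [show 1 + (k + j) = k + (1 + j) by omega, hper]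
    rw [h2', hadd]
end

section
/- Let q = 4, let k be a positive even integer, and let F be a finite field with |F| = q^{3k}. Define g : F → F by g(x) = S_{k+1}(x)^2 + S_{2k}(x)^{q^k+1}, and let K be the subfield of F with q^k elements. Suppose a ∈ F satisfies a + a^{q^k} + a^{q^{2k}} ≠ 0. Then there exists y ∈ K such that for all x ∈ F, Tr(a·g(x+y)) + Tr(a·g(x)) = 1, where Tr denotes the absolute trace from F to F_2. Consequently, the number of x ∈ F with Tr(a·g(x)) = 0 equals the number of x ∈ F with Tr(a·g(x)) = 1. -/
/-!
Let `K = {y | y ^ 4 ^ k = y}`, the subfield with `4 ^ k` elements. For `y ∈ K` one has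
`S_{2k}(y) = 2 S_k(y) = 0` and `S_{k+1}(y) = S_k(y) + y`, so additivity of `S` gives
`g(x + y) = g(x) + (S_k(y) + y)^2`. The map `y ↦ (S_k(y) + y)^2` is an injective, hence bijective,
self-map of `K` because `k + 1` is odd. Since the relative trace of `a` to `K` is nonzero, some
`c ∈ K` has `Tr(a c) = 1`; taking `y` with `(S_k(y) + y)^2 = c`, translation by `y` flips
`Tr(a g(·))` and exchanges its two level sets.
-/

/-- `S q m x = x + x^q + x^{q^2} + ⋯ + x^{q^{m-1}}`. -/
def S {F : Type*} [Field F] (q m : ℕ) (x : F) : F :=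
  ∑ i ∈ Finset.range m, x ^ q ^ i

/-- `g x = S_{k+1}(x)^2 + S_{2k}(x)^{q^k+1}` with `q = 4`. -/
def g {F : Type*} [Field F] (k : ℕ) (x : F) : F :=
  S 4 (k + 1) x ^ 2 + S 4 (2 * k) x ^ (4 ^ k + 1)

open Finset

section SumOfConjugates

variable {F : Type*} [Field F]

theorem S_succ (q m : ℕ) (x : F) : S q (m + 1) x = S q m x + x ^ q ^ m :=
  sum_range_succ _ _

theorem S_pow_add_self (q m : ℕ) (x : F) : S q m (x ^ q) + x = S q m x + x ^ q ^ m :=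
  calc S q m (x ^ q) + x = ∑ i ∈ range (m + 1), x ^ q ^ i := by
        simp only [S, sum_range_succ', pow_succ', pow_mul, pow_zero, pow_one]
    _ = S q m x + x ^ q ^ m := S_succ q m x

theorem S_of_pow_eq_self {q : ℕ} (m : ℕ) {x : F} (hx : x ^ q = x) : S q m x = m * x := by
  have hxi : ∀ i, x ^ q ^ i = x := fun i => by
    induction i with
    | zero => rw [pow_zero, pow_one]
    | succ i ih => rw [pow_succ, pow_mul, ih, hx]
  simp only [S, hxi, sum_const, card_range, nsmul_eq_mul]

theorem S_two_mul_of_pow_pow_eq_self {q m : ℕ} {x : F} (hx : x ^ q ^ m = x) :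
    S q (2 * m) x = 2 * S q m x := by
  simp only [S, two_mul, sum_range_add, pow_add, pow_mul, hx]

variable {p e q : ℕ} [ExpChar F p]

theorem add_pow_pow_of_eq_pow (hq : q = p ^ e) (n : ℕ) (x y : F) :
    (x + y) ^ q ^ n = x ^ q ^ n + y ^ q ^ n := by
  subst hq
  simp only [← pow_mul, add_pow_expChar_pow]

theorem S_add (hq : q = p ^ e) (m : ℕ) (x y : F) : S q m (x + y) = S q m x + S q m y := by
  simp only [S, add_pow_pow_of_eq_pow hq, sum_add_distrib]

theorem S_sub (hq : q = p ^ e) (m : ℕ) (x y : F) : S q m (x - y) = S q m x - S q m y := by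
  rw [eq_sub_iff_add_eq, ← S_add hq, sub_add_cancel]

theorem S_pow_pow (hq : q = p ^ e) (m n : ℕ) (x : F) : S q m x ^ q ^ n = S q m (x ^ q ^ n) := by
  subst hq
  simp only [S, ← pow_mul, sum_pow_char_pow, mul_comm]

/-- Raising `S_k(u) + u = 0` to the `q`-th power and comparing with `S_pow_add_self` forces
`u ^ q = u`, hence `S_k(u) = k u`. -/
theorem eq_zero_of_S_add_self_eq_zero (hq : q = p ^ e) {k : ℕ} (hk : (k + 1 : F) ≠ 0) {u : F}
    (hu : u ^ q ^ k = u) (hS : S q k u + u = 0) : u = 0 := by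
  have hq0 : q ≠ 0 := hq ▸ pow_ne_zero e (expChar_ne_zero F p)
  have hSq : S q k (u ^ q) + u ^ q = 0 := by
    calc S q k (u ^ q) + u ^ q = (S q k u + u) ^ q ^ 1 := by
          rw [add_pow_pow_of_eq_pow hq, S_pow_pow hq, pow_one]
      _ = 0 := by rw [hS, zero_pow (pow_ne_zero 1 hq0)]
  have huq : u ^ q = u := by
    have := S_pow_add_self q k u
    rw [hu] at this
    linear_combination hSq - this - hS
  rw [S_of_pow_eq_self k huq] at hS
  exact (mul_eq_zero.mp (by linear_combination hS)).resolve_left hk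

theorem S_add_self_mapsTo (hq : q = p ^ e) (k : ℕ) :
    Set.MapsTo (fun y : F => S q k y + y) {y | y ^ q ^ k = y} {y | y ^ q ^ k = y} := by
  intro y (hy : y ^ q ^ k = y)
  show (S q k y + y) ^ q ^ k = S q k y + y
  rw [add_pow_pow_of_eq_pow hq, S_pow_pow hq, hy]

theorem S_add_self_injOn (hq : q = p ^ e) {k : ℕ} (hk : (k + 1 : F) ≠ 0) :
    Set.InjOn (fun y : F => S q k y + y) {y | y ^ q ^ k = y} := by
  intro y (hy : y ^ q ^ k = y) y' (hy' : y' ^ q ^ k = y') h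
  have hu : (y - y') ^ q ^ k = y - y' := by
    subst hq
    rw [← pow_mul, sub_pow_expChar_pow, pow_mul, hy, hy']
  refine sub_eq_zero.mp (eq_zero_of_S_add_self_eq_zero hq hk hu ?_)
  rw [S_sub hq]
  linear_combination h

end SumOfConjugates

section CharTwo

variable {F : Type*} [Field F] [CharP F 2]

theorem g_add_of_pow_eq_self (k : ℕ) (x : F) {y : F} (hy : y ^ 4 ^ k = y) :
    g k (x + y) = g k x + (S 4 k y + y) ^ 2 := by
  have h4 : 4 = 2 ^ 2 := rfl
  have hS1 : S 4 (k + 1) (x + y) = S 4 (k + 1) x + (S 4 k y + y) := by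
    rw [S_add h4, S_succ 4 k y, hy]
  have hS2 : S 4 (2 * k) (x + y) = S 4 (2 * k) x := by
    rw [S_add h4, S_two_mul_of_pow_pow_eq_self hy, (CharTwo.two_eq_zero : (2 : F) = 0),
      zero_mul, add_zero]
  rw [g, g, hS1, hS2, CharTwo.add_sq]
  ring

theorem exists_sq_S_add_self_eq [Finite F] {k : ℕ} (hk : Even k) {c : F} (hc : c ^ 4 ^ k = c) :
    ∃ y, y ^ 4 ^ k = y ∧ (S 4 k y + y) ^ 2 = c := by
  have h4 : 4 = 2 ^ 2 := rfl
  set K := {y : F | y ^ 4 ^ k = y}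
  have hk1 : (k + 1 : F) ≠ 0 := by
    obtain ⟨m, rfl⟩ := hk
    simp [← two_mul, CharTwo.two_eq_zero]
  have hsq : Set.MapsTo (frobenius F 2) K K := fun y (hy : _ = _) =>
    show (y ^ 2) ^ 4 ^ k = y ^ 2 by rw [← pow_mul, mul_comm, pow_mul, hy]
  have hmaps := hsq.comp (S_add_self_mapsTo h4 k)
  have hinj := (frobenius_inj F 2).injOn.comp (S_add_self_injOn h4 hk1)
    (S_add_self_mapsTo h4 k)
  exact ((Set.toFinite K).injOn_iff_bijOn_of_mapsTo hmaps).mp hinj |>.surjOn hc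

end CharTwo

section Trace

variable {B E : Type*} [Field B] [Field E] [Algebra B E] (σ : E ≃ₐ[B] E)

theorem trace_sum_pow_apply (n : ℕ) (z : E) :
    Algebra.trace B E (∑ i ∈ range n, (σ ^ i) z) = n • Algebra.trace B E z := by
  simp only [map_sum, Algebra.trace_eq_of_algEquiv, sum_const, card_range]

theorem apply_sum_pow_apply {n : ℕ} (hσ : σ ^ n = 1) (z : E) :
    σ (∑ i ∈ range n, (σ ^ i) z) = ∑ i ∈ range n, (σ ^ i) z := by
  apply add_right_cancel (b := z)
  calc σ (∑ i ∈ range n, (σ ^ i) z) + z = ∑ i ∈ range (n + 1), (σ ^ i) z := by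
        simp only [map_sum, sum_range_succ', pow_succ', AlgEquiv.mul_apply, pow_zero,
          AlgEquiv.one_apply]
    _ = ∑ i ∈ range n, (σ ^ i) z + z := by rw [sum_range_succ, hσ, AlgEquiv.one_apply]

theorem sum_pow_apply_mul_of_apply_eq {c : E} (hc : σ c = c) (n : ℕ) (z : E) :
    ∑ i ∈ range n, (σ ^ i) (z * c) = (∑ i ∈ range n, (σ ^ i) z) * c := by
  have hci : ∀ i, (σ ^ i) c = c := fun i => by
    induction i with
    | zero => rfl
    | succ i ih => rw [pow_succ', AlgEquiv.mul_apply, ih, hc]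
  simp only [map_mul, hci, sum_mul]

/-- With `T = ∑_{i<n} σ^i` and `d = T(a)⁻¹ T(x)` one has
`n Tr(a d) = Tr(T(a d)) = Tr(T(x)) = n Tr(x)`, so any `x` of nonzero trace yields the witness
`Tr(x)⁻¹ d`. -/
theorem exists_apply_eq_self_trace_mul_eq_one {n : ℕ} (hσ : σ ^ n = 1) (hn : (n : B) ≠ 0)
    (htr : Algebra.trace B E ≠ 0) {a : E} (ha : ∑ i ∈ range n, (σ ^ i) a ≠ 0) :
    ∃ c, σ c = c ∧ Algebra.trace B E (a * c) = 1 := by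
  obtain ⟨x, hx⟩ : ∃ x, Algebra.trace B E x ≠ 0 := by
    by_contra! h
    exact htr (LinearMap.ext h)
  set d := (∑ i ∈ range n, (σ ^ i) a)⁻¹ * ∑ i ∈ range n, (σ ^ i) x
  have hd : σ d = d := by
    rw [map_mul, map_inv₀, apply_sum_pow_apply σ hσ, apply_sum_pow_apply σ hσ]
  have htrd : Algebra.trace B E (a * d) = Algebra.trace B E x := by
    refine mul_left_cancel₀ hn ?_
    calc (n : B) * Algebra.trace B E (a * d)
        = Algebra.trace B E ((∑ i ∈ range n, (σ ^ i) a) * d) := by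
          rw [← sum_pow_apply_mul_of_apply_eq σ hd, trace_sum_pow_apply, nsmul_eq_mul]
      _ = n * Algebra.trace B E x := by
          rw [mul_inv_cancel_left₀ ha, trace_sum_pow_apply, nsmul_eq_mul]
  refine ⟨(Algebra.trace B E x)⁻¹ • d, by rw [map_smul, hd], ?_⟩
  rw [mul_smul_comm, map_smul, htrd, smul_eq_mul, inv_mul_cancel₀ hx]

end Trace

theorem FiniteField.frobeniusAlgEquivOfAlgebraic_pow_apply (K L : Type*) [Field K] [Fintype K]
    [Field L] [Algebra K L] [Algebra.IsAlgebraic K L] (n : ℕ) (x : L) :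
    (frobeniusAlgEquivOfAlgebraic K L ^ n) x = x ^ Fintype.card K ^ n := by
  rw [AlgEquiv.coe_pow, coe_frobeniusAlgEquivOfAlgebraic_iterate]

theorem natCard_eq_zero_eq_natCard_eq_one_of_add_add_eq_one {G : Type*} [AddGroup G]
    {f : G → ZMod 2} {y : G} (h : ∀ x, f (x + y) + f x = 1) :
    Nat.card {x // f x = 0} = Nat.card {x // f x = 1} :=
  Nat.card_congr <| (Equiv.addRight y).subtypeEquiv fun x => by
    show f x = 0 ↔ f (x + y) = 1
    have hx := h x
    generalize f (x + y) = u at hx ⊢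
    generalize f x = v at hx
    revert u v
    decide

theorem stmt_12_general {F : Type*} [Field F] [Fintype F] [Algebra (ZMod 2) F]
    (k : ℕ) (hke : Even k) (hF : Fintype.card F = 4 ^ (3 * k))
    (a : F) (ha : a + a ^ 4 ^ k + a ^ 4 ^ (2 * k) ≠ 0) :
    (∃ y : F, y ^ 4 ^ k = y ∧ ∀ x : F,
        Algebra.trace (ZMod 2) F (a * g k (x + y)) + Algebra.trace (ZMod 2) F (a * g k x) = 1) ∧
    Nat.card {x : F // Algebra.trace (ZMod 2) F (a * g k x) = 0}
      = Nat.card {x : F // Algebra.trace (ZMod 2) F (a * g k x) = 1} := by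
  have : CharP F 2 := charP_of_injective_algebraMap (algebraMap (ZMod 2) F).injective 2
  set σ := FiniteField.frobeniusAlgEquivOfAlgebraic (ZMod 2) F ^ (2 * k)
  have hσ : ∀ i x, (σ ^ i) x = x ^ 4 ^ (k * i) := fun i x => by
    rw [← pow_mul, FiniteField.frobeniusAlgEquivOfAlgebraic_pow_apply, ZMod.card, mul_assoc,
      pow_mul]
    norm_num
  have hσ3 : σ ^ 3 = 1 := AlgEquiv.ext fun x => by
    rw [hσ, mul_comm, ← hF, FiniteField.pow_card, AlgEquiv.one_apply]
  obtain ⟨c, hc_fix, hc⟩ := exists_apply_eq_self_trace_mul_eq_one σ hσ3 (by decide)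
    (Algebra.trace_ne_zero _ _) (by simpa [sum_range_succ, hσ, mul_comm] using ha)
  have hc_mem : c ^ 4 ^ k = c := by rw [← mul_one k, ← hσ, pow_one, hc_fix]
  obtain ⟨y, hy, rfl⟩ := exists_sq_S_add_self_eq hke hc_mem
  have key : ∀ x, Algebra.trace (ZMod 2) F (a * g k (x + y)) +
      Algebra.trace (ZMod 2) F (a * g k x) = 1 := fun x => by
    rw [g_add_of_pow_eq_self k x hy, mul_add, map_add, hc, add_right_comm,
      CharTwo.add_self_eq_zero, zero_add]
  exact ⟨⟨y, hy, key⟩, natCard_eq_zero_eq_natCard_eq_one_of_add_add_eq_one key⟩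

theorem stmt_12 {F : Type*} [Field F] [Fintype F] [Algebra (ZMod 2) F]
    (k : ℕ) (hk : 0 < k) (hke : Even k) (hF : Fintype.card F = 4 ^ (3 * k))
    (a : F) (ha : a + a ^ 4 ^ k + a ^ 4 ^ (2 * k) ≠ 0) :
    (∃ y : F, y ^ 4 ^ k = y ∧ ∀ x : F,
        Algebra.trace (ZMod 2) F (a * g k (x + y)) + Algebra.trace (ZMod 2) F (a * g k x) = 1) ∧
    Nat.card {x : F // Algebra.trace (ZMod 2) F (a * g k x) = 0}
      = Nat.card {x : F // Algebra.trace (ZMod 2) F (a * g k x) = 1} :=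
  stmt_12_general k hke hF a ha
end

section
/- Let q = 4, let k be a positive even integer, and let F be a finite field with |F| = q^{3k}. Suppose a ∈ F is nonzero and a = b + b^{q^k} for some b ∈ F. Then for all x ∈ F, Tr(a·g(x)) = Tr(b · S_{2k}(x)^{2 q^{k+1}}), where g(x) = S_{k+1}(x)^2 + S_{2k}(x)^{q^k+1} and Tr denotes the absolute trace from F to F_2. -/
section aux

variable {F : Type*} [Field F] [Fintype F] [Algebra (ZMod 2) F]

lemma charF : CharP F 2 :=
  charP_of_injective_algebraMap (algebraMap (ZMod 2) F).injective 2

/-- trace is invariant under squaring -/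
lemma tr_sq (y : F) :
    Algebra.trace (ZMod 2) F (y ^ 2) = Algebra.trace (ZMod 2) F y := by
  haveI := charF (F := F)
  let φ : F →ₐ[ZMod 2] F :=
    { toRingHom := frobenius F 2
      commutes' := fun r => by
        have : r ^ 2 = r := by revert r; decide
        simp [frobenius_def, ← map_pow, this] }
  have hbij : Function.Bijective φ :=
    (Finite.injective_iff_bijective).mp (frobenius_inj F 2)
  have := Algebra.trace_eq_of_algEquiv (AlgEquiv.ofBijective φ hbij) y
  simpa [AlgEquiv.ofBijective, φ, frobenius_def] using this

lemma tr_pow4 (y : F) (j : ℕ) :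
    Algebra.trace (ZMod 2) F (y ^ 4 ^ j) = Algebra.trace (ZMod 2) F y := by
  induction j with
  | zero => simp
  | succ n ih =>
    have h1 : y ^ 4 ^ (n + 1) = ((y ^ 4 ^ n) ^ 2) ^ 2 := by
      rw [← pow_mul, ← pow_mul, pow_succ]
    rw [h1, tr_sq, tr_sq, ih]

lemma S_pow (m j : ℕ) (x : F) :
    S 4 m x ^ 4 ^ j = ∑ i ∈ Finset.Ico j (j + m), x ^ 4 ^ i := by
  haveI := charF (F := F)
  have h4 : (4 : ℕ) ^ j = 2 ^ (2 * j) := by rw [pow_mul]; norm_num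
  rw [S, h4, sum_pow_char_pow, Finset.sum_Ico_eq_sum_range]
  simp only [Nat.add_sub_cancel_left]
  refine Finset.sum_congr rfl fun i _ => ?_
  rw [← h4, ← pow_mul, ← pow_add, Nat.add_comm j i]

end aux

theorem stmt_14 {F : Type*} [Field F] [Fintype F] [Algebra (ZMod 2) F]
    (k : ℕ) (hk : 0 < k) (hke : Even k) (hF : Fintype.card F = 4 ^ (3 * k))
    (a b : F) (ha0 : a ≠ 0) (hab : a = b + b ^ 4 ^ k) :
    ∀ x : F, Algebra.trace (ZMod 2) F (a * g k x)
      = Algebra.trace (ZMod 2) F (b * S 4 (2 * k) x ^ (2 * 4 ^ (k + 1))) := by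
  haveI := charF (F := F)
  intro x
  set Tr := Algebra.trace (ZMod 2) F with hTr
  -- basic periodicity
  have hcard : ∀ y : F, y ^ 4 ^ (3 * k) = y := by
    intro y; rw [← hF]; exact FiniteField.pow_card y
  have hper : ∀ i : ℕ, x ^ 4 ^ (3 * k + i) = x ^ 4 ^ i := by
    intro i
    rw [pow_add, pow_mul, hcard]
  set f : ℕ → F := fun i => x ^ 4 ^ i with hf
  set T := S 4 (2 * k) x with hT
  set w := S 4 (k + 1) x with hw
  -- expressions for powers of T and w
  have hT0 : T = ∑ i ∈ Finset.Ico 0 (2 * k), f i := by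
    have := S_pow (2 * k) 0 x; simpa using this
  have hTk : T ^ 4 ^ k = ∑ i ∈ Finset.Ico k (3 * k), f i := by
    have h := S_pow (2 * k) k x
    rw [show k + 2 * k = 3 * k from by omega] at h; exact h
  have hT2k : T ^ 4 ^ (2 * k) = ∑ i ∈ Finset.Ico (2 * k) (4 * k), f i := by
    have h := S_pow (2 * k) (2 * k) x
    rw [show 2 * k + 2 * k = 4 * k from by omega] at h; exact h
  have hTk1 : T ^ 4 ^ (k + 1) = ∑ i ∈ Finset.Ico (k + 1) (3 * k + 1), f i := by
    have h := S_pow (2 * k) (k + 1) x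
    rw [show k + 1 + 2 * k = 3 * k + 1 from by omega] at h; exact h
  have hw0 : w = ∑ i ∈ Finset.Ico 0 (k + 1), f i := by
    have := S_pow (k + 1) 0 x; simpa using this
  have hw2k : w ^ 4 ^ (2 * k) = ∑ i ∈ Finset.Ico (2 * k) (3 * k + 1), f i := by
    have h := S_pow (k + 1) (2 * k) x
    rw [show 2 * k + (k + 1) = 3 * k + 1 from by omega] at h; exact h
  -- shift: sum over [3k, 3k+m) = sum over [0, m) for m ≤ 3k
  have hshift : ∀ m : ℕ, ∑ i ∈ Finset.Ico (3 * k) (3 * k + m), f i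
      = ∑ i ∈ Finset.Ico 0 m, f i := by
    intro m
    rw [Finset.sum_Ico_eq_sum_range, Finset.sum_Ico_eq_sum_range]
    simp only [Nat.add_sub_cancel_left, Nat.sub_zero, Nat.zero_add]
    exact Finset.sum_congr rfl fun i _ => hper i
  -- identity (A): T^{4^k} + T^{4^{2k}} = T
  have hA : T ^ 4 ^ k + T ^ 4 ^ (2 * k) = T := by
    rw [hTk, hT2k, hT0]
    have e1 : ∑ i ∈ Finset.Ico (2 * k) (4 * k), f i
        = (∑ i ∈ Finset.Ico (2 * k) (3 * k), f i) + ∑ i ∈ Finset.Ico 0 k, f i := by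
      rw [← Finset.sum_Ico_consecutive f (by omega : 2 * k ≤ 3 * k) (by omega : 3 * k ≤ 4 * k)]
      congr 1
      have : 4 * k = 3 * k + k := by omega
      rw [this, hshift]
    have e2 : ∑ i ∈ Finset.Ico k (3 * k), f i
        = (∑ i ∈ Finset.Ico k (2 * k), f i) + ∑ i ∈ Finset.Ico (2 * k) (3 * k), f i :=
      (Finset.sum_Ico_consecutive f (by omega) (by omega)).symm
    have e3 : ∑ i ∈ Finset.Ico 0 (2 * k), f i
        = (∑ i ∈ Finset.Ico 0 k, f i) + ∑ i ∈ Finset.Ico k (2 * k), f i :=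
      (Finset.sum_Ico_consecutive f (by omega) (by omega)).symm
    rw [e1, e2, e3]
    have h2 : ∀ y : F, y + y = 0 := CharTwo.add_self_eq_zero
    linear_combination h2 (∑ i ∈ Finset.Ico (2 * k) (3 * k), f i)
  -- identity (B): w + w^{4^{2k}} = T + T^{4^{k+1}}
  have hB : w + w ^ 4 ^ (2 * k) = T + T ^ 4 ^ (k + 1) := by
    rw [hw2k, hTk1, hw0, hT0]
    have e1 : ∑ i ∈ Finset.Ico (2 * k) (3 * k + 1), f i
        = (∑ i ∈ Finset.Ico (2 * k) (3 * k), f i) + f 0 := by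
      rw [← Finset.sum_Ico_consecutive f (by omega : 2 * k ≤ 3 * k) (by omega : 3 * k ≤ 3 * k + 1)]
      congr 1
      rw [Finset.sum_Ico_eq_sum_range]
      simp only [Nat.add_sub_cancel_left]
      simpa [hf] using hper 0
    have e2 : ∑ i ∈ Finset.Ico (k + 1) (3 * k + 1), f i
        = (∑ i ∈ Finset.Ico (k + 1) (3 * k), f i) + f 0 := by
      rw [← Finset.sum_Ico_consecutive f (by omega : k + 1 ≤ 3 * k) (by omega : 3 * k ≤ 3 * k + 1)]
      congr 1
      rw [Finset.sum_Ico_eq_sum_range]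
      simp only [Nat.add_sub_cancel_left]
      simpa [hf] using hper 0
    have e3 : ∑ i ∈ Finset.Ico 0 (2 * k), f i
        = (∑ i ∈ Finset.Ico 0 (k + 1), f i) + ∑ i ∈ Finset.Ico (k + 1) (2 * k), f i :=
      (Finset.sum_Ico_consecutive f (by omega) (by omega)).symm
    have e4 : ∑ i ∈ Finset.Ico (k + 1) (3 * k), f i
        = (∑ i ∈ Finset.Ico (k + 1) (2 * k), f i) + ∑ i ∈ Finset.Ico (2 * k) (3 * k), f i :=
      (Finset.sum_Ico_consecutive f (by omega) (by omega)).symm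
    rw [e1, e2, e3, e4]
    have h2 : ∀ y : F, y + y = 0 := CharTwo.add_self_eq_zero
    linear_combination (-1 : F) * h2 (∑ i ∈ Finset.Ico (k + 1) (2 * k), f i)
  -- Step I : Tr (a * T^(4^k+1)) = Tr (b * T^2)
  have key2 : (b * (T * T ^ 4 ^ (2 * k))) ^ 4 ^ k = b ^ 4 ^ k * (T ^ 4 ^ k * T) := by
    have hTT : (T ^ 4 ^ (2 * k)) ^ 4 ^ k = T := by
      rw [← pow_mul, ← pow_add, show 2 * k + k = 3 * k from by ring, hcard]
    rw [mul_pow, mul_pow, hTT]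
  have stepI : Tr (a * T ^ (4 ^ k + 1)) = Tr (b * T ^ 2) := by
    have e : a * T ^ (4 ^ k + 1)
        = b * (T ^ 4 ^ k * T) + (b * (T * T ^ 4 ^ (2 * k))) ^ 4 ^ k := by
      rw [key2, hab]; ring
    rw [e, map_add, tr_pow4, ← map_add]
    congr 1
    have e2 : b * (T ^ 4 ^ k * T) + b * (T * T ^ 4 ^ (2 * k))
        = b * T * (T ^ 4 ^ k + T ^ 4 ^ (2 * k)) := by ring
    rw [e2, hA]; ring
  -- Step II : Tr (a * w^2) = Tr (b*T^2) + Tr (b * T^(2*4^(k+1)))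
  have key3 : (b * (w ^ 4 ^ (2 * k)) ^ 2) ^ 4 ^ k = b ^ 4 ^ k * w ^ 2 := by
    have hww : ((w ^ 4 ^ (2 * k)) ^ 2) ^ 4 ^ k = w ^ 2 := by
      rw [← pow_mul, ← pow_mul,
        show 4 ^ (2 * k) * (2 * 4 ^ k) = 4 ^ (3 * k) * 2 from by
          rw [show 3 * k = 2 * k + k from by ring, pow_add]; ring,
        pow_mul, hcard]
    rw [mul_pow, hww]
  have sq_add : ∀ u v : F, (u + v) ^ 2 = u ^ 2 + v ^ 2 := fun u v => by
    have h2 : ∀ y : F, y + y = 0 := CharTwo.add_self_eq_zero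
    linear_combination h2 (u * v)
  have stepII : Tr (a * w ^ 2)
      = Tr (b * T ^ 2) + Tr (b * T ^ (2 * 4 ^ (k + 1))) := by
    have e : a * w ^ 2 = b * w ^ 2 + (b * (w ^ 4 ^ (2 * k)) ^ 2) ^ 4 ^ k := by
      rw [key3, hab]; ring
    rw [e, map_add, tr_pow4, ← map_add]
    have e2 : b * w ^ 2 + b * (w ^ 4 ^ (2 * k)) ^ 2
        = b * (w + w ^ 4 ^ (2 * k)) ^ 2 := by rw [sq_add]; ring
    rw [e2, hB, sq_add]
    have e3 : (T ^ 4 ^ (k + 1)) ^ 2 = T ^ (2 * 4 ^ (k + 1)) := by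
      rw [← pow_mul, mul_comm]
    rw [e3, mul_add, map_add]
  -- conclusion
  have hg : a * g k x = a * w ^ 2 + a * T ^ (4 ^ k + 1) := by
    rw [g, hw, hT]; ring
  rw [hg, map_add, stepI, stepII]
  have h2 : ∀ t : ZMod 2, t + t = 0 := by decide
  linear_combination h2 (Tr (b * T ^ 2))
end
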